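/- arXiv:2410.13554 — 2 statements merged into one kernel-verified Lean document; each statement's English description precedes it below -/
import Mathlib

section
/- In the setting of the previous statement, dim_k W(π) = dim_k W; that is, Σ_{n=1}^r dim_k(proj_{π_n}(W ∩ ⊕_{v∈F_n} U_v)) = dim_k W. -/
attribute [local instance] Classical.propDecidable

variable {V : Type*} [Fintype V] {k : Type*} [Field k]
variable {U : V → Type*} [∀ v, AddCommGroup (U v)] [∀ v, Module k (U v)]

noncomputable def projEnd (k : Type*) [Field k] {V : Type*} (U : V → Type*)
    [∀ v, AddCommGroup (U v)] [∀ v, Module k (U v)] (I : Set V) :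
    ((v : V) → U v) →ₗ[k] ((v : V) → U v) :=
  LinearMap.pi fun v => if v ∈ I then LinearMap.proj v else 0

lemma projEnd_apply (I : Set V) (x : (v : V) → U v) (v : V) :
    projEnd k U I x v = if v ∈ I then x v else 0 := by
  simp only [projEnd, LinearMap.pi_apply]
  split <;> simp

lemma mem_ker_projEnd (I : Set V) (x : (v : V) → U v) :
    x ∈ LinearMap.ker (projEnd k U I) ↔ ∀ v ∈ I, x v = 0 := by
  simp only [LinearMap.mem_ker, funext_iff, projEnd_apply, Pi.zero_apply]
  constructor
  · intro hx v hv; have := hx v; rwa [if_pos hv] at this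
  · intro hx v; split
    · exact hx v ‹_›
    · rfl

lemma aux_rank {M : Type*} [AddCommGroup M] [Module k M] (p : Submodule k M)
    [FiniteDimensional k p] (f : M →ₗ[k] M) :
    Module.finrank k (p.map f) + Module.finrank k ((p ⊓ LinearMap.ker f : Submodule k M)) =
      Module.finrank k p := by
  have h1 := LinearMap.finrank_range_add_finrank_ker (f.domRestrict p)
  rw [LinearMap.range_domRestrict] at h1
  rw [← h1]
  congr 1
  have : LinearMap.ker (f.domRestrict p) = (p ⊓ LinearMap.ker f).comap p.subtype := by
    rw [LinearMap.ker_domRestrict, Submodule.comap_inf, Submodule.comap_subtype_self, top_inf_eq]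
  rw [this]
  exact (Submodule.comapSubtypeEquivOfLe inf_le_left).finrank_eq.symm

/-- `dim_k W(π) = dim_k W`: the dimensions of the pieces `proj_{π_n}(W^{F_n})` sum up to
the dimension of `W`. -/
theorem stmt11 (W : Submodule k ((v : V) → U v)) [FiniteDimensional k ↥W]
    (r : ℕ) (h : V → ℕ) (hlev : ∀ v, 1 ≤ h v ∧ h v ≤ r)
    (hsurj : ∀ n, 1 ≤ n → n ≤ r → ∃ v, h v = n) :
    ∑ n ∈ Finset.Icc 1 r,
        Module.finrank k
          ↥((W ⊓ LinearMap.ker (projEnd k U ({v | h v ≤ n}ᶜ))).map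
              (projEnd k U {v | h v = n})) =
      Module.finrank k ↥W := by
  set K : ℕ → Submodule k ((v : V) → U v) :=
    fun n => W ⊓ LinearMap.ker (projEnd k U ({v | h v ≤ n}ᶜ)) with hKdef
  have hKle : ∀ n, K n ≤ W := fun n => inf_le_left
  haveI : ∀ n, FiniteDimensional k (K n) :=
    fun n => Submodule.finiteDimensional_of_le (hKle n)
  have hK0 : K 0 = ⊥ := by
    rw [eq_bot_iff]
    intro x hx
    have h2 := (mem_ker_projEnd _ x).mp hx.2
    have hx0 : x = 0 := funext fun v => h2 v (by
      have := (hlev v).1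
      simp only [Set.mem_compl_iff, Set.mem_setOf_eq]
      omega)
    simp [hx0]
  have hKr : K r = W := by
    refine le_antisymm (hKle r) fun x hx => ⟨hx, (mem_ker_projEnd _ x).mpr fun v hv => ?_⟩
    exact absurd (hlev v).2 hv
  have hstep : ∀ n, 1 ≤ n →
      Module.finrank k ((K n).map (projEnd k U {v | h v = n})) + Module.finrank k (K (n-1))
        = Module.finrank k (K n) := by
    intro n hn
    have heq : (K n ⊓ LinearMap.ker (projEnd k U {v | h v = n})) = K (n - 1) := by
      ext x
      simp only [hKdef, Submodule.mem_inf, mem_ker_projEnd, Set.mem_compl_iff,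
        Set.mem_setOf_eq]
      constructor
      · rintro ⟨⟨hW, h1⟩, h2⟩
        refine ⟨hW, fun v hv => ?_⟩
        by_cases hc : h v = n
        · exact h2 v hc
        · exact h1 v (by omega)
      · rintro ⟨hW, h1⟩
        exact ⟨⟨hW, fun v hv => h1 v (by omega)⟩, fun v hv => h1 v (by omega)⟩
    rw [← aux_rank (K n) (projEnd k U {v | h v = n}), heq]
  have key : ∀ m, (∑ n ∈ Finset.Icc 1 m,
      Module.finrank k ((K n).map (projEnd k U {v | h v = n})))
        = Module.finrank k (K m) := by
    intro m
    induction m with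
    | zero => rw [hK0]; simp
    | succ m ih =>
      rw [Finset.sum_Icc_succ_top (by omega : 1 ≤ m + 1), ih]
      have := hstep (m+1) (by omega)
      have h2 : m + 1 - 1 = m := rfl
      rw [h2] at this
      omega
  exact (key r).trans (by rw [hKr])
end

section
/- Let (G, π) be a level graph on vertex set V with level function h. Then the residue space 𝒢_π ⊆ k^𝔼, defined by (R1) ψ_a = 0 for all downward arrows a, (R2) Σ_{a∈𝔼_v} ψ_a = 0 for all v ∈ V, (R3) ψ_a + ψ_{ā} = 0 for all horizontal arrows a, and (R4) Σ_{a ∈ A^Ξ_{π,n}} ψ_a = 0 for each level n and each connected component Ξ of the subgraph induced on vertices of level < n (where A^Ξ_{π,n} is the set of upward arrows with tail of level n and head in Ξ), has dimension |E| − |V| + c, where c is the number of connected components of G. -/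
set_option linter.unusedSectionVars false
set_option maxHeartbeats 1600000



attribute [local instance] Classical.propDecidable

open Finset

variable {V E : Type*} [Fintype V] [Fintype E]

/-- The tail of an arrow: the edge `e` with endpoints `ends e = (u, w)` gives the two
arrows `(e, false) : u → w` and `(e, true) : w → u`. -/
def tl (ends : E → V × V) (a : E × Bool) : V :=
  if a.2 then (ends a.1).2 else (ends a.1).1

/-- The reversal of an arrow. -/
def rev {E : Type*} (a : E × Bool) : E × Bool := (a.1, !a.2)

/-- The head of an arrow. -/
def hd (ends : E → V × V) (a : E × Bool) : V := tl ends (rev a)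

/-- The space `Υ_π` of functions on arrows vanishing on all downward arrows
(arrows `u → v` with `h u < h v`). -/
noncomputable def Ups (k : Type*) [Field k] (ends : E → V × V) (h : V → ℕ) :
    Submodule k ((E × Bool) → k) :=
  ⨅ a ∈ {a : E × Bool | h (tl ends a) < h (hd ends a)},
    LinearMap.ker (LinearMap.proj (R := k) (φ := fun _ : E × Bool => k) a)

/-- The linear functional `ψ ↦ Σ_{a ∈ 𝔼_v} ψ_a` summing the coordinates over the arrows
with tail `v`. -/
noncomputable def locF (k : Type*) [Field k] (ends : E → V × V) (v : V) :
    ((E × Bool) → k) →ₗ[k] k :=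
  ∑ a ∈ Finset.univ.filter fun a : E × Bool => tl ends a = v,
    LinearMap.proj (R := k) (φ := fun _ : E × Bool => k) a

/-- The space `Υ⁰_π`: vanishing on downward arrows together with the local residue
conditions at every vertex. -/
noncomputable def Ups0 (k : Type*) [Field k] (ends : E → V × V) (h : V → ℕ) :
    Submodule k ((E × Bool) → k) :=
  Ups k ends h ⊓ ⨅ v : V, LinearMap.ker (locF k ends v)

/-- The underlying adjacency graph of the multigraph `(V, E, ends)`. -/
def adjG (ends : E → V × V) : SimpleGraph V :=
  SimpleGraph.fromRel fun u w => ∃ e, ends e = (u, w)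

/-- The space cut out by the Rosenlicht conditions `ψ_a + ψ_{ā} = 0` on horizontal
arrows. -/
noncomputable def Ros (k : Type*) [Field k] (ends : E → V × V) (h : V → ℕ) :
    Submodule k ((E × Bool) → k) :=
  ⨅ a ∈ {a : E × Bool | h (tl ends a) = h (hd ends a)},
    LinearMap.ker (LinearMap.proj (R := k) (φ := fun _ : E × Bool => k) a +
      LinearMap.proj (R := k) (φ := fun _ : E × Bool => k) (rev a))

/-- The linear functional summing the coordinates over the upward arrows with tail of
level `n` and head in the connected component `C` of the subgraph induced on vertices of
level `< n`. -/
noncomputable def globF (k : Type*) [Field k] (ends : E → V × V) (h : V → ℕ) (n : ℕ)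
    (C : ((adjG ends).induce {v : V | h v < n}).ConnectedComponent) :
    ((E × Bool) → k) →ₗ[k] k :=
  ∑ a ∈ Finset.univ.filter fun a : E × Bool =>
      h (tl ends a) = n ∧
        ∃ hm : hd ends a ∈ {v : V | h v < n},
          ((adjG ends).induce {v : V | h v < n}).connectedComponentMk ⟨hd ends a, hm⟩ = C,
    LinearMap.proj (R := k) (φ := fun _ : E × Bool => k) a

/-- The space cut out by the global residue conditions (R4). -/
noncomputable def Glob (k : Type*) [Field k] (ends : E → V × V) (h : V → ℕ) :
    Submodule k ((E × Bool) → k) :=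
  ⨅ n : ℕ, ⨅ C : ((adjG ends).induce {v : V | h v < n}).ConnectedComponent,
    LinearMap.ker (globF k ends h n C)

/-- The space `𝓡_π` cut out by conditions (R1)–(R3). -/
noncomputable def RSpace (k : Type*) [Field k] (ends : E → V × V) (h : V → ℕ) :
    Submodule k ((E × Bool) → k) :=
  Ups0 k ends h ⊓ Ros k ends h

/-- The residue space `𝒢_π` cut out by conditions (R1)–(R4). -/
noncomputable def ResSpace (k : Type*) [Field k] (ends : E → V × V) (h : V → ℕ) :
    Submodule k ((E × Bool) → k) :=
  RSpace k ends h ⊓ Glob k ends h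


lemma pi_single_sum {k : Type*} [Field k] {ι : Type*} [Fintype ι] (f : ι → k) :
    f = ∑ i, f i • (Pi.single i 1 : ι → k) := by
  funext j
  rw [Finset.sum_apply]
  simp [Pi.single_apply]

section Rank

variable (k : Type*) [Field k] (ew : E → V × V)

noncomputable def Tmap : (E → k) →ₗ[k] (V → k) :=
  LinearMap.pi fun u => ∑ e : E,
    ((if (ew e).1 = u then (1:k) else 0) - if (ew e).2 = u then 1 else 0) •
      LinearMap.proj (R := k) (φ := fun _ : E => k) e

lemma Tmap_apply (f : E → k) (u : V) :
    Tmap k ew f u = ∑ e : E,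
      ((if (ew e).1 = u then (1:k) else 0) - if (ew e).2 = u then 1 else 0) * f e := by
  simp [Tmap, LinearMap.pi_apply, LinearMap.sum_apply]

noncomputable def Smap : (V → k) →ₗ[k] ((adjG ew).ConnectedComponent → k) :=
  LinearMap.pi fun c =>
    ∑ u ∈ Finset.univ.filter (fun u => (adjG ew).connectedComponentMk u = c),
      LinearMap.proj (R := k) (φ := fun _ : V => k) u

lemma Smap_apply (g : V → k) (c : (adjG ew).ConnectedComponent) :
    Smap k ew g c
      = ∑ u ∈ Finset.univ.filter (fun u => (adjG ew).connectedComponentMk u = c), g u := by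
  simp [Smap, LinearMap.pi_apply, LinearMap.sum_apply]

lemma comp_ends_eq (e : E) :
    (adjG ew).connectedComponentMk (ew e).1 = (adjG ew).connectedComponentMk (ew e).2 := by
  by_cases hxy : (ew e).1 = (ew e).2
  · rw [hxy]
  · exact SimpleGraph.ConnectedComponent.connectedComponentMk_eq_of_adj
      ((SimpleGraph.fromRel_adj _ _ _).mpr ⟨hxy, Or.inl ⟨e, rfl⟩⟩)

lemma Tmap_single (e : E) :
    Tmap k ew (Pi.single e 1) = Pi.single (ew e).1 1 - Pi.single (ew e).2 1 := by
  funext u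
  rw [Tmap_apply]
  simp [Pi.single_apply, mul_ite, eq_comm]

lemma Smap_single (x : V) :
    Smap k ew (Pi.single x 1)
      = Pi.single ((adjG ew).connectedComponentMk x) (1:k) := by
  funext c
  rw [Smap_apply]
  simp only [Pi.single_apply]
  rw [Finset.sum_ite_eq' ]
  simp [eq_comm]

lemma diff_mem_range {u w : V} (hr : (adjG ew).Reachable u w) :
    Pi.single u 1 - Pi.single w 1 ∈ LinearMap.range (Tmap k ew) := by
  obtain ⟨p⟩ := hr
  induction p with
  | nil => simp
  | @cons u v w ha p ih =>
    have step : Pi.single u 1 - Pi.single v 1 ∈ LinearMap.range (Tmap k ew) := by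
      rcases (SimpleGraph.fromRel_adj _ _ _).mp ha with ⟨hne, he | he⟩
      · obtain ⟨e, he⟩ := he
        exact ⟨Pi.single e 1, by rw [Tmap_single, he]⟩
      · obtain ⟨e, he⟩ := he
        refine ⟨-Pi.single e 1, ?_⟩
        rw [map_neg, Tmap_single, he]
        abel
    have := add_mem step ih
    rwa [sub_add_sub_cancel] at this

lemma out_comp (c : (adjG ew).ConnectedComponent) :
    (adjG ew).connectedComponentMk c.out = c := c.out_eq

lemma range_Tmap : LinearMap.range (Tmap k ew) = LinearMap.ker (Smap k ew) := by
  apply le_antisymm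
  · rintro _ ⟨f, rfl⟩
    rw [LinearMap.mem_ker]
    have hf : f = ∑ e : E, f e • (Pi.single e 1 : E → k) := pi_single_sum f
    rw [hf, map_sum, map_sum]
    refine Finset.sum_eq_zero fun e _ => ?_
    rw [map_smul, map_smul, Tmap_single, map_sub, Smap_single, Smap_single,
      comp_ends_eq, sub_self, smul_zero]
  · intro g hg
    rw [LinearMap.mem_ker] at hg
    letI : Fintype (adjG ew).ConnectedComponent := Fintype.ofFinite _
    have hrep : g = ∑ u : V, g u •
        ((Pi.single u 1 : V → k) - Pi.single ((adjG ew).connectedComponentMk u).out 1)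
        + ∑ u : V, g u • (Pi.single ((adjG ew).connectedComponentMk u).out 1 : V → k) := by
      rw [← Finset.sum_add_distrib]
      simp only [← smul_add, sub_add_cancel]
      exact pi_single_sum g
    rw [hrep]
    apply add_mem
    · apply Submodule.sum_mem
      intro u _
      apply Submodule.smul_mem
      apply diff_mem_range
      apply SimpleGraph.ConnectedComponent.exact
      rw [out_comp]
    · have h2 : ∑ u : V, g u • (Pi.single ((adjG ew).connectedComponentMk u).out 1 : V → k)
          = ∑ c : (adjG ew).ConnectedComponent, Smap k ew g c • (Pi.single c.out 1 : V → k) := by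
        rw [← Finset.sum_fiberwise univ (fun u => (adjG ew).connectedComponentMk u)
          (fun u => g u • (Pi.single ((adjG ew).connectedComponentMk u).out 1 : V → k))]
        refine Finset.sum_congr rfl fun c _ => ?_
        rw [Smap_apply, Finset.sum_smul]
        refine Finset.sum_congr rfl fun u hu => ?_
        rw [Finset.mem_filter] at hu
        rw [hu.2]
      rw [h2, hg]
      simp

lemma Smap_surj : Function.Surjective (Smap k ew) := by
  letI : Fintype (adjG ew).ConnectedComponent := Fintype.ofFinite _
  intro m
  refine ⟨∑ c : (adjG ew).ConnectedComponent, m c • (Pi.single c.out 1 : V → k), ?_⟩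
  rw [map_sum]
  simp only [map_smul, Smap_single, out_comp]
  exact (pi_single_sum m).symm

theorem rank_aux :
    Module.finrank k ↥(LinearMap.ker (Tmap k ew)) + Fintype.card V
      = Fintype.card E + Nat.card (adjG ew).ConnectedComponent := by
  letI : Fintype (adjG ew).ConnectedComponent := Fintype.ofFinite _
  have h1 := LinearMap.finrank_range_add_finrank_ker (Tmap k ew)
  have h2 := LinearMap.finrank_range_add_finrank_ker (Smap k ew)
  rw [LinearMap.range_eq_top.mpr (Smap_surj k ew), finrank_top] at h2
  rw [range_Tmap] at h1
  rw [Module.finrank_fintype_fun_eq_card] at h1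
  rw [Module.finrank_fintype_fun_eq_card, Module.finrank_fintype_fun_eq_card] at h2
  rw [Nat.card_eq_fintype_card]
  omega

end Rank

section Main


variable (k : Type*) [Field k] (ends : E → V × V) (h : V → ℕ)

@[simp] lemma tl_false (e : E) : tl ends (e, false) = (ends e).1 := by simp [tl]
@[simp] lemma tl_true (e : E) : tl ends (e, true) = (ends e).2 := by simp [tl]
@[simp] lemma hd_false (e : E) : hd ends (e, false) = (ends e).2 := by simp [hd, rev, tl]
@[simp] lemma hd_true (e : E) : hd ends (e, true) = (ends e).1 := by simp [hd, rev, tl]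

/-- coefficient of the parametrization of `Ups ⊓ Ros` by `E → k`. -/
noncomputable def coef (a : E × Bool) : k :=
  if h (tl ends a) < h (hd ends a) then 0
  else if h (hd ends a) < h (tl ends a) then 1
  else if a.2 then -1 else 1

noncomputable def phi : (E → k) →ₗ[k] ((E × Bool) → k) where
  toFun f := fun a => coef k ends h a * f a.1
  map_add' f g := by funext a; simp [mul_add]
  map_smul' c f := by funext a; simp; ring

@[simp] lemma phi_apply (f : E → k) (a : E × Bool) :
    phi k ends h f a = coef k ends h a * f a.1 := rfl

/-- depth bound -/
def Dlev : ℕ := Finset.univ.sup h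

lemma hD (x : V) : h x < Dlev h + 1 :=
  Nat.lt_succ_of_le (Finset.le_sup (Finset.mem_univ x))

/-- The induced graph on vertices of level `< n`. -/
abbrev Gn (n : ℕ) : SimpleGraph {v : V | h v < n} :=
  (adjG ends).induce {v : V | h v < n}

/-- vertex type of the auxiliary graph `H`. -/
abbrev VH := V ⊕ (Σ n : Fin (Dlev h + 1), (Gn ends h ↑n).ConnectedComponent)

noncomputable def endsH (e : E) : VH ends h × VH ends h :=
  if hxy : h (ends e).1 = h (ends e).2 then (Sum.inl (ends e).1, Sum.inl (ends e).2)
  else if hlt : h (ends e).2 < h (ends e).1 then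
    (Sum.inl (ends e).1,
      Sum.inr ⟨⟨h (ends e).1, hD h (ends e).1⟩,
        (Gn ends h (h (ends e).1)).connectedComponentMk ⟨(ends e).2, hlt⟩⟩)
  else
    (Sum.inl (ends e).2,
      Sum.inr ⟨⟨h (ends e).2, hD h (ends e).2⟩,
        (Gn ends h (h (ends e).2)).connectedComponentMk ⟨(ends e).1, lt_of_le_of_ne (not_lt.mp hlt) hxy⟩⟩)


@[simp] lemma rev_fst {E : Type*} (a : E × Bool) : (rev a).1 = a.1 := rfl
@[simp] lemma rev_snd {E : Type*} (a : E × Bool) : (rev a).2 = !a.2 := rfl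

@[simp] lemma tl_rev (a : E × Bool) : tl ends (rev a) = hd ends a := rfl

@[simp] lemma hd_rev (a : E × Bool) : hd ends (rev a) = tl ends a := by
  obtain ⟨e, b⟩ := a; cases b <;> rfl

lemma mem_Ups_iff {ψ : (E × Bool) → k} : ψ ∈ Ups k ends h ↔
    ∀ a : E × Bool, h (tl ends a) < h (hd ends a) → ψ a = 0 := by
  simp [Ups, Submodule.mem_iInf, Set.mem_setOf_eq, LinearMap.mem_ker]

lemma mem_Ros_iff {ψ : (E × Bool) → k} : ψ ∈ Ros k ends h ↔
    ∀ a : E × Bool, h (tl ends a) = h (hd ends a) → ψ a + ψ (rev a) = 0 := by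
  simp [Ros, Submodule.mem_iInf, Set.mem_setOf_eq, LinearMap.mem_ker]

lemma coef_down {a : E × Bool} (ha : h (tl ends a) < h (hd ends a)) :
    coef k ends h a = 0 := by simp [coef, ha]

lemma coef_up {a : E × Bool} (ha : h (hd ends a) < h (tl ends a)) :
    coef k ends h a = 1 := by
  rw [coef, if_neg (by omega), if_pos ha]

lemma coef_horiz {a : E × Bool} (ha : h (tl ends a) = h (hd ends a)) :
    coef k ends h a = if a.2 then -1 else 1 := by
  rw [coef, if_neg (by omega), if_neg (by omega)]

lemma range_phi : LinearMap.range (phi k ends h) = Ups k ends h ⊓ Ros k ends h := by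
  apply le_antisymm
  · rintro _ ⟨f, rfl⟩
    simp only [SetLike.mem_coe, Submodule.mem_inf]
    constructor
    · rw [mem_Ups_iff]
      intro a ha
      simp [phi_apply, coef_down k ends h ha]
    · rw [mem_Ros_iff]
      intro a ha
      have ha' : h (tl ends (rev a)) = h (hd ends (rev a)) := by simpa using ha.symm
      rw [phi_apply, phi_apply, coef_horiz k ends h ha, coef_horiz k ends h ha', rev_fst,
        rev_snd]
      cases a.2 <;> simp <;> ring
  · intro ψ hmem
    simp only [SetLike.mem_coe, Submodule.mem_inf] at hmem
    obtain ⟨hU, hR⟩ := hmem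
    rw [mem_Ups_iff] at hU
    rw [mem_Ros_iff] at hR
    refine ⟨fun e => if h (ends e).1 < h (ends e).2 then ψ (e, true) else ψ (e, false), ?_⟩
    funext a
    obtain ⟨e, b⟩ := a
    rw [phi_apply]
    dsimp only
    rcases lt_trichotomy (h (ends e).1) (h (ends e).2) with hc | hc | hc
    · cases b
      · rw [coef_down k ends h (by simpa using hc), zero_mul,
          (hU (e, false) (by simpa using hc)).symm]
      · rw [coef_up k ends h (by simpa using hc)]
        simp [hc]
    · cases b
      · rw [coef_horiz k ends h (by simpa using hc), if_neg (by simp),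
          if_neg (not_lt.mpr (le_of_eq hc.symm)), one_mul]
      · rw [coef_horiz k ends h (by simpa using hc.symm), if_pos rfl,
          if_neg (not_lt.mpr (le_of_eq hc.symm))]
        have h2 := hR (e, false) (by simpa using hc)
        simp only [rev, Bool.not_false] at h2
        linear_combination -h2
    · cases b
      · rw [coef_up k ends h (by simpa using hc)]
        simp [not_lt.mpr (le_of_lt hc)]
      · rw [coef_down k ends h (by simpa using hc), zero_mul,
          (hU (e, true) (by simpa using hc)).symm]

lemma phi_inj : Function.Injective (phi k ends h) := by
  rw [injective_iff_map_eq_zero]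
  intro f hf
  funext e
  rcases lt_trichotomy (h (ends e).1) (h (ends e).2) with hc | hc | hc
  · have := congrFun hf (e, true)
    rwa [phi_apply, coef_up k ends h (by simpa using hc), one_mul] at this
  · have := congrFun hf (e, false)
    rwa [phi_apply, coef_horiz k ends h (by simpa using hc), if_neg (by simp), one_mul]
      at this
  · have := congrFun hf (e, false)
    rwa [phi_apply, coef_up k ends h (by simpa using hc), one_mul] at this

noncomputable instance : Fintype (VH ends h) := Fintype.ofFinite _

lemma locF_apply (v : V) (ψ : (E × Bool) → k) :
    locF k ends v ψ = ∑ a ∈ Finset.univ.filter (fun a : E × Bool => tl ends a = v), ψ a := by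
  simp [locF, LinearMap.sum_apply]

lemma globF_apply (n : ℕ) (C : (Gn ends h n).ConnectedComponent) (ψ : (E × Bool) → k) :
    globF k ends h n C ψ = ∑ a ∈ Finset.univ.filter fun a : E × Bool =>
      h (tl ends a) = n ∧ ∃ hm : hd ends a ∈ {v : V | h v < n},
        (Gn ends h n).connectedComponentMk ⟨hd ends a, hm⟩ = C, ψ a := by
  simp [globF, LinearMap.sum_apply]

lemma globF_top (n : ℕ) (hn : Dlev h < n) (C : (Gn ends h n).ConnectedComponent)
    (ψ : (E × Bool) → k) : globF k ends h n C ψ = 0 := by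
  rw [globF_apply]
  refine Finset.sum_eq_zero fun a ha => absurd ((Finset.mem_filter.mp ha).2.1) ?_
  have := hD h (tl ends a)
  omega

lemma locF_phi (v : V) (f : E → k) :
    locF k ends v (phi k ends h f) = Tmap k (endsH ends h) f (Sum.inl v) := by
  rw [locF_apply, Tmap_apply, Finset.sum_filter, Fintype.sum_prod_type]
  refine Finset.sum_congr rfl fun e _ => ?_
  rw [Fintype.sum_bool]
  simp only [phi_apply]
  rcases lt_trichotomy (h (ends e).1) (h (ends e).2) with hc | hc | hc
  · rw [endsH, dif_neg (by omega), dif_neg (by omega),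
      coef_down k ends h (a := (e, false)) (by simpa using hc),
      coef_up k ends h (a := (e, true)) (by simpa using hc)]
    by_cases hy : (ends e).2 = v <;> by_cases hx : (ends e).1 = v <;>
      simp [hx, hy, tl] <;> ring
  · rw [endsH, dif_pos hc,
      coef_horiz k ends h (a := (e, false)) (by simpa using hc),
      coef_horiz k ends h (a := (e, true)) (by simpa using hc.symm)]
    by_cases hy : (ends e).2 = v <;> by_cases hx : (ends e).1 = v <;>
      simp [hx, hy, tl] <;> ring
  · rw [endsH, dif_neg (by omega), dif_pos hc,
      coef_down k ends h (a := (e, true)) (by simpa using hc),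
      coef_up k ends h (a := (e, false)) (by simpa using hc)]
    by_cases hy : (ends e).2 = v <;> by_cases hx : (ends e).1 = v <;>
      simp [hx, hy, tl] <;> ring

lemma inr_eq_iff {m : ℕ} (pm : m < Dlev h + 1) {x : V} (px : h x < m)
    (n : ℕ) (hn : n < Dlev h + 1) (C : (Gn ends h n).ConnectedComponent) :
    (Sum.inr ⟨⟨m, pm⟩, (Gn ends h m).connectedComponentMk ⟨x, px⟩⟩ : VH ends h)
        = Sum.inr ⟨⟨n, hn⟩, C⟩
      ↔ (m = n ∧ ∃ hm : h x < n, (Gn ends h n).connectedComponentMk ⟨x, hm⟩ = C) := by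
  constructor
  · intro hEq
    rw [Sum.inr.injEq] at hEq
    have h1 : m = n := by
      have := congrArg (fun s : (Σ n : Fin (Dlev h + 1),
        (Gn ends h ↑n).ConnectedComponent) => (s.1 : ℕ)) hEq
      simpa using this
    subst h1
    refine ⟨rfl, px, ?_⟩
    have h2 := Sigma.mk.inj_iff.mp hEq
    exact eq_of_heq h2.2
  · rintro ⟨rfl, hm, hcomp⟩
    exact congrArg (fun c => (Sum.inr ⟨⟨m, pm⟩, c⟩ : VH ends h)) hcomp

lemma globF_phi (n : ℕ) (hn : n < Dlev h + 1) (C : (Gn ends h n).ConnectedComponent)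
    (f : E → k) :
    globF k ends h n C (phi k ends h f)
      = - Tmap k (endsH ends h) f (Sum.inr ⟨⟨n, hn⟩, C⟩) := by
  rw [Tmap_apply, ← Finset.sum_neg_distrib, globF_apply, Finset.sum_filter,
    Fintype.sum_prod_type]
  refine Finset.sum_congr rfl fun e _ => ?_
  rw [Fintype.sum_bool]
  simp only [phi_apply]
  rcases lt_trichotomy (h (ends e).1) (h (ends e).2) with hc | hc | hc
  · rw [endsH, dif_neg (by omega), dif_neg (by omega)]
    have hfalse : ¬ (h (tl ends (e, false)) = n ∧
        ∃ hm : hd ends (e, false) ∈ {v : V | h v < n},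
          (Gn ends h n).connectedComponentMk ⟨hd ends (e, false), hm⟩ = C) := by
      rintro ⟨h1, hm, -⟩
      rw [tl_false] at h1
      have : h (ends e).2 < n := hm
      omega
    rw [if_neg hfalse]
    have hiff : (h (tl ends (e, true)) = n ∧
        ∃ hm : hd ends (e, true) ∈ {v : V | h v < n},
          (Gn ends h n).connectedComponentMk ⟨hd ends (e, true), hm⟩ = C)
        ↔ (Sum.inr ⟨⟨h (ends e).2, hD h (ends e).2⟩,
            (Gn ends h (h (ends e).2)).connectedComponentMk
              ⟨(ends e).1, hc⟩⟩ : VH ends h)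
          = Sum.inr ⟨⟨n, hn⟩, C⟩ := by
      rw [inr_eq_iff]
      simp [tl, hd, rev]
    rw [coef_up k ends h (a := (e, true)) (by simpa using hc)]
    by_cases hR : (h (tl ends (e, true)) = n ∧
        ∃ hm : hd ends (e, true) ∈ {v : V | h v < n},
          (Gn ends h n).connectedComponentMk ⟨hd ends (e, true), hm⟩ = C)
    · rw [if_pos hR, if_pos (hiff.mp hR), if_neg (by simp)]
      ring
    · rw [if_neg hR, if_neg ((not_congr hiff).mp hR), if_neg (by simp)]
      ring
  · rw [endsH, dif_pos hc]
    have hf1 : ¬ (h (tl ends (e, true)) = n ∧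
        ∃ hm : hd ends (e, true) ∈ {v : V | h v < n},
          (Gn ends h n).connectedComponentMk ⟨hd ends (e, true), hm⟩ = C) := by
      rintro ⟨h1, hm, -⟩
      rw [tl_true] at h1
      have : h (ends e).1 < n := hm
      omega
    have hf2 : ¬ (h (tl ends (e, false)) = n ∧
        ∃ hm : hd ends (e, false) ∈ {v : V | h v < n},
          (Gn ends h n).connectedComponentMk ⟨hd ends (e, false), hm⟩ = C) := by
      rintro ⟨h1, hm, -⟩
      rw [tl_false] at h1
      have : h (ends e).2 < n := hm
      omega
    rw [if_neg hf1, if_neg hf2, if_neg (by simp), if_neg (by simp)]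
    ring
  · rw [endsH, dif_neg (by omega), dif_pos hc]
    have hfalse : ¬ (h (tl ends (e, true)) = n ∧
        ∃ hm : hd ends (e, true) ∈ {v : V | h v < n},
          (Gn ends h n).connectedComponentMk ⟨hd ends (e, true), hm⟩ = C) := by
      rintro ⟨h1, hm, -⟩
      rw [tl_true] at h1
      have : h (ends e).1 < n := hm
      omega
    rw [if_neg hfalse]
    have hiff : (h (tl ends (e, false)) = n ∧
        ∃ hm : hd ends (e, false) ∈ {v : V | h v < n},
          (Gn ends h n).connectedComponentMk ⟨hd ends (e, false), hm⟩ = C)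
        ↔ (Sum.inr ⟨⟨h (ends e).1, hD h (ends e).1⟩,
            (Gn ends h (h (ends e).1)).connectedComponentMk ⟨(ends e).2, hc⟩⟩ : VH ends h)
          = Sum.inr ⟨⟨n, hn⟩, C⟩ := by
      rw [inr_eq_iff]
      simp [tl, hd, rev]
    rw [coef_up k ends h (a := (e, false)) (by simpa using hc)]
    by_cases hR : (h (tl ends (e, false)) = n ∧
        ∃ hm : hd ends (e, false) ∈ {v : V | h v < n},
          (Gn ends h n).connectedComponentMk ⟨hd ends (e, false), hm⟩ = C)
    · rw [if_pos hR, if_pos (hiff.mp hR), if_neg (by simp)]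
      ring
    · rw [if_neg hR, if_neg ((not_congr hiff).mp hR), if_neg (by simp)]
      ring

lemma comap_phi_ResSpace :
    Submodule.comap (phi k ends h) (ResSpace k ends h)
      = LinearMap.ker (Tmap k (endsH ends h)) := by
  ext f
  rw [Submodule.mem_comap, LinearMap.mem_ker]
  have hUR : phi k ends h f ∈ Ups k ends h ⊓ Ros k ends h := by
    rw [← range_phi]; exact ⟨f, rfl⟩
  constructor
  · rintro ⟨⟨⟨-, hloc⟩, -⟩, hglob⟩
    funext u
    rcases u with v | ⟨nf, C⟩
    · rw [Pi.zero_apply, ← locF_phi]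
      exact LinearMap.mem_ker.mp ((Submodule.mem_iInf _).mp hloc v)
    · have hg : globF k ends h ↑nf C (phi k ends h f) = 0 := by
        have h1 := (Submodule.mem_iInf _).mp hglob (↑nf : ℕ)
        exact LinearMap.mem_ker.mp ((Submodule.mem_iInf _).mp h1 C)
      rw [globF_phi k ends h ↑nf nf.isLt C f] at hg
      rw [Pi.zero_apply]
      exact neg_eq_zero.mp hg
  · intro hT
    refine ⟨⟨⟨hUR.1, ?_⟩, hUR.2⟩, ?_⟩
    · rw [SetLike.mem_coe, Submodule.mem_iInf]
      intro v
      rw [LinearMap.mem_ker, locF_phi, hT, Pi.zero_apply]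
    · rw [SetLike.mem_coe, Glob, Submodule.mem_iInf]
      intro n
      rw [Submodule.mem_iInf]
      intro C
      rw [LinearMap.mem_ker]
      by_cases hn : n < Dlev h + 1
      · rw [globF_phi k ends h n hn C, hT, Pi.zero_apply, neg_zero]
      · exact globF_top k ends h n (by omega) C _

lemma finrank_Res : Module.finrank k ↥(ResSpace k ends h)
    = Module.finrank k ↥(LinearMap.ker (Tmap k (endsH ends h))) := by
  have hle : ResSpace k ends h ≤ LinearMap.range (phi k ends h) := by
    rw [range_phi]
    exact fun x hx => ⟨hx.1.1.1, hx.1.2⟩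
  have hmc := Submodule.map_comap_eq_self hle
  conv_lhs => rw [← hmc]
  rw [← comap_phi_ResSpace]
  exact ((Submodule.equivMapOfInjective (phi k ends h) (phi_inj k ends h)
    (Submodule.comap (phi k ends h) (ResSpace k ends h))).finrank_eq).symm

/-- Inclusion homomorphism between induced subgraphs. -/
def incl (n : ℕ) : Gn ends h n →g Gn ends h (n + 1) where
  toFun w := ⟨w.1, show h w.1 < n + 1 by have : h w.1 < n := w.2; omega⟩
  map_rel' := fun {a b} hab => hab

noncomputable def Phi0 :
    VH ends h → Σ n : Fin (Dlev h + 1), (Gn ends h (↑n + 1)).ConnectedComponent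
  | Sum.inl v => ⟨⟨h v, hD h v⟩,
      (Gn ends h (h v + 1)).connectedComponentMk ⟨v, Nat.lt_succ_self _⟩⟩
  | Sum.inr ⟨m, C⟩ => ⟨m, C.map (incl ends h ↑m)⟩

lemma sigma2_eq {m m' : ℕ} (pm : m < Dlev h + 1) (pm' : m' < Dlev h + 1) (hmm : m = m')
    {x y : V} (px : h x < m + 1) (py : h y < m' + 1)
    (hr : (Gn ends h (m + 1)).Reachable ⟨x, px⟩ ⟨y, show h y < m + 1 by omega⟩) :
    (⟨⟨m, pm⟩, (Gn ends h (m + 1)).connectedComponentMk ⟨x, px⟩⟩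
      : Σ n : Fin (Dlev h + 1), (Gn ends h (↑n + 1)).ConnectedComponent)
    = ⟨⟨m', pm'⟩, (Gn ends h (m' + 1)).connectedComponentMk ⟨y, py⟩⟩ := by
  subst hmm
  exact congrArg (fun c => (⟨⟨m, pm⟩, c⟩
    : Σ n : Fin (Dlev h + 1), (Gn ends h (↑n + 1)).ConnectedComponent))
    (SimpleGraph.ConnectedComponent.sound hr)

lemma gn_adj_of_edge {n : ℕ} (e : E) (hne : (ends e).1 ≠ (ends e).2)
    (hx : h (ends e).1 < n) (hy : h (ends e).2 < n) :
    (Gn ends h n).Adj ⟨(ends e).1, hx⟩ ⟨(ends e).2, hy⟩ := by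
  show (adjG ends).Adj (ends e).1 (ends e).2
  exact (SimpleGraph.fromRel_adj _ _ _).mpr ⟨hne, Or.inl ⟨e, rfl⟩⟩

lemma phi0_endsH (e : E) :
    Phi0 ends h (endsH ends h e).1 = Phi0 ends h (endsH ends h e).2 := by
  rcases lt_trichotomy (h (ends e).1) (h (ends e).2) with hc | hc | hc
  · rw [endsH, dif_neg (by omega), dif_neg (by omega)]
    exact sigma2_eq ends h _ _ rfl _ _
      ((gn_adj_of_edge ends h e (fun hh => by rw [hh] at hc; omega)
        (by omega) (by omega)).symm.reachable)
  · rw [endsH, dif_pos hc]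
    by_cases hxy : (ends e).1 = (ends e).2
    · rw [hxy]
    · exact sigma2_eq ends h _ _ hc _ _
        ((gn_adj_of_edge ends h e hxy (by omega) (by omega)).reachable)
  · rw [endsH, dif_neg (by omega), dif_pos hc]
    exact sigma2_eq ends h _ _ rfl _ _
      ((gn_adj_of_edge ends h e (fun hh => by rw [hh] at hc; omega)
        (by omega) (by omega)).reachable)

lemma phi0_adj {u u' : VH ends h} (ha : (adjG (endsH ends h)).Adj u u') :
    Phi0 ends h u = Phi0 ends h u' := by
  rcases (SimpleGraph.fromRel_adj _ _ _).mp ha with ⟨-, ⟨e, he⟩ | ⟨e, he⟩⟩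
  · have h0 := phi0_endsH ends h e
    rw [congrArg Prod.fst he, congrArg Prod.snd he] at h0
    exact h0
  · have h0 := phi0_endsH ends h e
    rw [congrArg Prod.fst he, congrArg Prod.snd he] at h0
    exact h0.symm

noncomputable def PhiBar : (adjG (endsH ends h)).ConnectedComponent →
    Σ n : Fin (Dlev h + 1), (Gn ends h (↑n + 1)).ConnectedComponent :=
  SimpleGraph.ConnectedComponent.lift (Phi0 ends h) (by
    intro v w p hp
    clear hp
    induction p with
    | nil => rfl
    | cons ha _ ih => exact (phi0_adj ends h ha).trans ih)

noncomputable def FtoH (n : ℕ) (hn : n < Dlev h + 1)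
    (w : {v : V // v ∈ {u : V | h u < n + 1}}) : VH ends h :=
  if _ : h ↑w = n then Sum.inl ↑w
  else Sum.inr ⟨⟨n, hn⟩, (Gn ends h n).connectedComponentMk
    ⟨w.1, show h w.1 < n by have : h w.1 < n + 1 := w.2; omega⟩⟩

lemma FtoH_step (n : ℕ) (hn : n < Dlev h + 1) (e : E)
    (hne : (ends e).1 ≠ (ends e).2)
    (hx : h (ends e).1 < n + 1) (hy : h (ends e).2 < n + 1) :
    (adjG (endsH ends h)).connectedComponentMk (FtoH ends h n hn ⟨(ends e).1, hx⟩)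
      = (adjG (endsH ends h)).connectedComponentMk (FtoH ends h n hn ⟨(ends e).2, hy⟩) := by
  rcases lt_trichotomy (h (ends e).1) (h (ends e).2) with hc | hc | hc
  · -- h x < h y; deep end is y
    by_cases hyn : h (ends e).2 = n
    · subst hyn
      rw [FtoH, dif_neg (show ¬h (ends e).1 = h (ends e).2 by omega),
        FtoH, dif_pos (show h (ends e).2 = h (ends e).2 from rfl)]
      refine (SimpleGraph.ConnectedComponent.connectedComponentMk_eq_of_adj ?_).symm
      refine (SimpleGraph.fromRel_adj _ _ _).mpr ⟨by simp, Or.inl ⟨e, ?_⟩⟩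
      rw [endsH, dif_neg (by omega), dif_neg (by omega)]
    · rw [FtoH, dif_neg (show ¬h (ends e).1 = n by omega),
        FtoH, dif_neg (show ¬h (ends e).2 = n by omega)]
      refine congrArg _ (congrArg _ ?_)
      exact congrArg (Sigma.mk _)
        (SimpleGraph.ConnectedComponent.sound
          ((gn_adj_of_edge ends h e hne (by omega) (by omega)).reachable))
  · by_cases hxn : h (ends e).1 = n
    · rw [FtoH, dif_pos (show h (ends e).1 = n from hxn),
        FtoH, dif_pos (show h (ends e).2 = n by omega)]
      refine SimpleGraph.ConnectedComponent.connectedComponentMk_eq_of_adj ?_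
      refine (SimpleGraph.fromRel_adj _ _ _).mpr
        ⟨by simp [hne], Or.inl ⟨e, ?_⟩⟩
      rw [endsH, dif_pos hc]
    · rw [FtoH, dif_neg (show ¬h (ends e).1 = n by omega),
        FtoH, dif_neg (show ¬h (ends e).2 = n by omega)]
      refine congrArg _ (congrArg _ ?_)
      exact congrArg (Sigma.mk _)
        (SimpleGraph.ConnectedComponent.sound
          ((gn_adj_of_edge ends h e hne (by omega) (by omega)).reachable))
  · by_cases hxn : h (ends e).1 = n
    · subst hxn
      rw [FtoH, dif_pos (show h (ends e).1 = h (ends e).1 from rfl),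
        FtoH, dif_neg (show ¬h (ends e).2 = h (ends e).1 by omega)]
      refine SimpleGraph.ConnectedComponent.connectedComponentMk_eq_of_adj ?_
      refine (SimpleGraph.fromRel_adj _ _ _).mpr ⟨by simp, Or.inl ⟨e, ?_⟩⟩
      rw [endsH, dif_neg (by omega), dif_pos hc]
    · rw [FtoH, dif_neg (show ¬h (ends e).1 = n by omega),
        FtoH, dif_neg (show ¬h (ends e).2 = n by omega)]
      refine congrArg _ (congrArg _ ?_)
      exact congrArg (Sigma.mk _)
        (SimpleGraph.ConnectedComponent.sound
          ((gn_adj_of_edge ends h e hne (by omega) (by omega)).reachable))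

lemma FtoH_step' (n : ℕ) (hn : n < Dlev h + 1)
    (w w' : {v : V // v ∈ {u : V | h u < n + 1}}) (hne : w.1 ≠ w'.1)
    (he : ∃ e, ends e = (w.1, w'.1)) :
    (adjG (endsH ends h)).connectedComponentMk (FtoH ends h n hn w)
      = (adjG (endsH ends h)).connectedComponentMk (FtoH ends h n hn w') := by
  obtain ⟨e, he⟩ := he
  have h1 : (ends e).1 = w.1 := by rw [he]
  have h2 : (ends e).2 = w'.1 := by rw [he]
  have hx : h (ends e).1 < n + 1 := by rw [h1]; exact w.2
  have hy : h (ends e).2 < n + 1 := by rw [h2]; exact w'.2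
  have step := FtoH_step ends h n hn e (by rw [h1, h2]; exact hne) hx hy
  have ew : (⟨(ends e).1, hx⟩ : {v : V // v ∈ {u : V | h u < n + 1}}) = w :=
    Subtype.ext h1
  have ew' : (⟨(ends e).2, hy⟩ : {v : V // v ∈ {u : V | h u < n + 1}}) = w' :=
    Subtype.ext h2
  rwa [ew, ew'] at step

noncomputable def PsiFun (n : ℕ) (hn : n < Dlev h + 1) :
    (Gn ends h (n + 1)).ConnectedComponent → (adjG (endsH ends h)).ConnectedComponent :=
  SimpleGraph.ConnectedComponent.lift
    (fun w => (adjG (endsH ends h)).connectedComponentMk (FtoH ends h n hn w)) (by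
      intro v w p hp
      clear hp
      induction p with
      | nil => rfl
      | @cons a b c ha q ih =>
        refine Eq.trans ?_ ih
        have ha' : (adjG ends).Adj a.1 b.1 := ha
        rcases (SimpleGraph.fromRel_adj _ _ _).mp ha' with ⟨hne, ⟨e, he⟩ | ⟨e, he⟩⟩
        · exact FtoH_step' ends h n hn a b hne ⟨e, he⟩
        · exact (FtoH_step' ends h n hn b a (Ne.symm hne) ⟨e, he⟩).symm)

noncomputable def Psi
    (p : Σ n : Fin (Dlev h + 1), (Gn ends h (↑n + 1)).ConnectedComponent) :
    (adjG (endsH ends h)).ConnectedComponent :=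
  PsiFun ends h ↑p.1 p.1.isLt p.2

lemma Psi_PhiBar (c : (adjG (endsH ends h)).ConnectedComponent) :
    Psi ends h (PhiBar ends h c) = c := by
  refine SimpleGraph.ConnectedComponent.ind (fun u => ?_) c
  rcases u with v | ⟨nf, C⟩
  · show Psi ends h (Phi0 ends h (Sum.inl v)) = _
    rw [Phi0]
    show (adjG (endsH ends h)).connectedComponentMk
      (FtoH ends h (h v) (hD h v) ⟨v, Nat.lt_succ_self _⟩) = _
    rw [FtoH, dif_pos (show h v = h v from rfl)]
  · refine SimpleGraph.ConnectedComponent.ind (fun w => ?_) C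
    show Psi ends h (Phi0 ends h (Sum.inr ⟨nf, _⟩)) = _
    rw [Phi0]
    show (adjG (endsH ends h)).connectedComponentMk
      (FtoH ends h ↑nf nf.isLt ⟨w.1, _⟩) = _
    rw [FtoH, dif_neg (show ¬h w.1 = ↑nf by have : h w.1 < ↑nf := w.2; omega)]

lemma PhiBar_Psi (p : Σ n : Fin (Dlev h + 1), (Gn ends h (↑n + 1)).ConnectedComponent) :
    PhiBar ends h (Psi ends h p) = p := by
  obtain ⟨nf, C⟩ := p
  refine SimpleGraph.ConnectedComponent.ind (fun w => ?_) C
  show PhiBar ends h ((adjG (endsH ends h)).connectedComponentMk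
    (FtoH ends h ↑nf nf.isLt w)) = _
  by_cases hw : h w.1 = ↑nf
  · rw [FtoH, dif_pos hw]
    show Phi0 ends h (Sum.inl w.1) = _
    rw [Phi0]
    exact sigma2_eq ends h _ _ hw _ _ (by rfl)
  · rw [FtoH, dif_neg hw]
    rfl

noncomputable def compEquiv : (adjG (endsH ends h)).ConnectedComponent ≃
    (Σ n : Fin (Dlev h + 1), (Gn ends h (↑n + 1)).ConnectedComponent) where
  toFun := PhiBar ends h
  invFun := Psi ends h
  left_inv := Psi_PhiBar ends h
  right_inv := PhiBar_Psi ends h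

lemma card_comps_zero : Nat.card (Gn ends h 0).ConnectedComponent = 0 := by
  haveI : IsEmpty {v : V | h v < 0} := ⟨fun w => by have : h w.1 < 0 := w.2; omega⟩
  exact Nat.card_of_isEmpty

lemma card_comps_top : Nat.card (Gn ends h (Dlev h + 1)).ConnectedComponent
    = Nat.card (adjG ends).ConnectedComponent := by
  refine Nat.card_congr (SimpleGraph.Iso.connectedComponentEquiv ?_)
  exact { Equiv.subtypeUnivEquiv (fun v => hD h v) with map_rel_iff' := Iff.rfl }

lemma card_VH : Nat.card (VH ends h) = Fintype.card V
    + ∑ i ∈ Finset.range (Dlev h + 1), Nat.card (Gn ends h i).ConnectedComponent := by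
  letI : ∀ i : ℕ, Fintype (Gn ends h i).ConnectedComponent := fun i => Fintype.ofFinite _
  rw [Nat.card_sum, Nat.card_eq_fintype_card (α := V), Nat.card_eq_fintype_card,
    Fintype.card_sigma]
  congr 1
  rw [← Fin.sum_univ_eq_sum_range (fun i => Nat.card (Gn ends h i).ConnectedComponent)]
  exact Finset.sum_congr rfl fun i _ => by rw [Nat.card_eq_fintype_card]

lemma card_compsH : Nat.card (adjG (endsH ends h)).ConnectedComponent
    = ∑ i ∈ Finset.range (Dlev h + 1), Nat.card (Gn ends h (i + 1)).ConnectedComponent := by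
  letI : ∀ i : ℕ, Fintype (Gn ends h i).ConnectedComponent := fun i => Fintype.ofFinite _
  rw [Nat.card_congr (compEquiv ends h), Nat.card_eq_fintype_card, Fintype.card_sigma]
  rw [← Fin.sum_univ_eq_sum_range (fun i => Nat.card (Gn ends h (i + 1)).ConnectedComponent)]
  exact Finset.sum_congr rfl fun i _ => by rw [Nat.card_eq_fintype_card]

end Main

/-- `dim 𝒢_π = |E| − |V| + c`, the genus of the graph. -/
theorem stmt14 (k : Type*) [Field k] (ends : E → V × V) (h : V → ℕ) :
    (Module.finrank k ↥(ResSpace k ends h) : ℤ) =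
      (Fintype.card E : ℤ) - (Fintype.card V : ℤ) +
        (Nat.card (adjG ends).ConnectedComponent : ℤ) := by
  have hres := finrank_Res k ends h
  have hrank := rank_aux k (endsH ends h)
  rw [← Nat.card_eq_fintype_card (α := VH ends h)] at hrank
  have hVH := card_VH ends h
  have hH := card_compsH ends h
  have h0 := card_comps_zero ends h
  have htop := card_comps_top ends h
  have h1 := Finset.sum_range_succ' (fun i => Nat.card (Gn ends h i).ConnectedComponent)
    (Dlev h + 1)
  have h2 := Finset.sum_range_succ (fun i => Nat.card (Gn ends h i).ConnectedComponent)
    (Dlev h + 1)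
  rw [hres]
  omega
end
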